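/- Let X have 2(m+k) elements (m, k ≥ 1) partitioned into sets A, B, C with |A| = |B| = m, |C| = 2k. Let s > 0 and let D be a dissimilarity on X with D(x,y) = s for all x ∈ A, y ∈ B, and D(x,y) ≤ s/(3(m+k)⁵) for all other pairs. Then any binary rooted phylogenetic tree T on X minimizing the NEME score σ_D over all binary rooted phylogenetic trees on X contains two distinct vertices v, w with disjoint clusters C(v), C(w), with |C(v)| = |C(w)| = m+k, and with A ⊆ C(v), B ⊆ C(w). -/

import Mathlib

open Finset

/-- A rooted phylogenetic tree on `X`, encoded by its hierarchy of clusters: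
the single child of the root corresponds to the cluster `univ`, leaves to singletons,
and the internal vertices to the clusters of the laminar family. -/
structure RPhyloTree (X : Type*) [Fintype X] [DecidableEq X] where
  clusters : Finset (Finset X)
  top_mem : (Finset.univ : Finset X) ∈ clusters
  singleton_mem : ∀ x : X, ({x} : Finset X) ∈ clusters
  laminar : ∀ C ∈ clusters, ∀ D ∈ clusters, C ⊆ D ∨ D ⊆ C ∨ Disjoint C D

namespace RPhyloTree

variable {X : Type*} [Fintype X] [DecidableEq X]

/-- The children of the vertex (cluster) `C`: the maximal clusters strictly below `C`. -/
def children (t : RPhyloTree X) (C : Finset X) : Finset (Finset X) :=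
  t.clusters.filter (fun A => A ⊂ C ∧ ∀ B ∈ t.clusters, A ⊂ B → ¬ B ⊂ C)

/-- The lowest common ancestor of `x` and `y`: the smallest cluster containing both. -/
def lca (t : RPhyloTree X) (x y : X) : Finset X :=
  (t.clusters.filter fun C => x ∈ C ∧ y ∈ C).inf'
    ⟨Finset.univ, by simp [t.top_mem]⟩ id

/-- The NEME coefficient `α^T_{x,y} = (deg(lca(x,y)) - 2) /
(2 · Σ_{{u,u'} ⊆ ch(lca(x,y))} |C(u)|·|C(u')|)`.  Here the sum over ordered pairs of
distinct children (`offDiag`) equals twice the sum over unordered pairs, and the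
degree of an internal vertex is the number of its children plus one. -/
noncomputable def coeff (t : RPhyloTree X) (x y : X) : ℝ :=
  (((t.children (t.lca x y)).card : ℝ) - 1) /
    (∑ p ∈ (t.children (t.lca x y)).offDiag, ((p.1.card : ℝ) * (p.2.card : ℝ)))

/-- The NEME score `σ_D(T) = Σ_{{x,y}} α^T_{x,y} · D(x,y)`; the sum over ordered pairs
of distinct elements is twice the sum over unordered pairs. -/
noncomputable def score (t : RPhyloTree X) (D : X → X → ℝ) : ℝ :=
  (1 / 2) * ∑ p ∈ (Finset.univ : Finset X).offDiag, t.coeff p.1 p.2 * D p.1 p.2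

/-- A rooted phylogenetic tree is binary if every internal vertex has exactly two children. -/
def IsBinary (t : RPhyloTree X) : Prop :=
  ∀ C ∈ t.clusters, 2 ≤ C.card → (t.children C).card = 2

end RPhyloTree

/-- A dissimilarity on `X`: symmetric and vanishing on the diagonal. -/
def IsDissimilarity {X : Type*} (D : X → X → ℝ) : Prop :=
  (∀ x y, D x y = D y x) ∧ ∀ x, D x x = 0


namespace RPhyloTree

variable {X : Type*} [Fintype X] [DecidableEq X] (t : RPhyloTree X)

lemma lca_spec (x y : X) :
    t.lca x y ∈ t.clusters ∧ x ∈ t.lca x y ∧ y ∈ t.lca x y := by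
  have h : t.lca x y ∈ (↑(t.clusters.filter fun C => x ∈ C ∧ y ∈ C) : Set (Finset X)) := by
    apply Finset.inf'_mem
    · intro a ha b hb
      simp only [coe_filter, Set.mem_setOf_eq, mem_coe] at ha hb ⊢
      obtain ⟨ha1, hax, hay⟩ := ha
      obtain ⟨hb1, hbx, hby⟩ := hb
      rcases t.laminar a ha1 b hb1 with h | h | h
      · rw [inf_eq_left.2 h]; exact ⟨ha1, hax, hay⟩
      · rw [inf_eq_right.2 h]; exact ⟨hb1, hbx, hby⟩
      · exact absurd hbx (Finset.disjoint_left.1 h hax)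
    · intro i hi; exact hi
  simp only [coe_filter, Set.mem_setOf_eq, mem_coe] at h
  exact h

lemma lca_mem (x y : X) : t.lca x y ∈ t.clusters := (t.lca_spec x y).1
lemma left_mem_lca (x y : X) : x ∈ t.lca x y := (t.lca_spec x y).2.1
lemma right_mem_lca (x y : X) : y ∈ t.lca x y := (t.lca_spec x y).2.2

lemma lca_le {x y : X} {C : Finset X} (hC : C ∈ t.clusters) (hx : x ∈ C) (hy : y ∈ C) :
    t.lca x y ⊆ C := by
  exact Finset.inf'_le id (Finset.mem_filter.2 ⟨hC, hx, hy⟩)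

lemma lca_comm (x y : X) : t.lca x y = t.lca y x := by
  unfold lca
  congr 1
  ext C
  simp [and_comm]

lemma mem_children {C A : Finset X} :
    A ∈ t.children C ↔ A ∈ t.clusters ∧ A ⊂ C ∧ ∀ B ∈ t.clusters, A ⊂ B → ¬ B ⊂ C := by
  simp [children, mem_filter]

lemma child_nonempty {C A : Finset X} (h2 : 2 ≤ C.card) (hA : A ∈ t.children C) :
    A.Nonempty := by
  rw [mem_children] at hA
  by_contra hemp
  rw [not_nonempty_iff_eq_empty] at hemp
  obtain ⟨x, hx⟩ := Finset.card_pos.1 (by omega : 0 < C.card)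
  have hxC : ({x} : Finset X) ⊂ C := by
    constructor
    · simp [hx]
    · intro hsub
      have := Finset.card_le_card hsub
      simp at this; omega
  exact hA.2.2 {x} (t.singleton_mem x) (by rw [hemp]; exact Finset.empty_ssubset.2 (Finset.singleton_nonempty x)) hxC

lemma children_disjoint {C A A' : Finset X} (hA : A ∈ t.children C) (hA' : A' ∈ t.children C)
    (hne : A ≠ A') : Disjoint A A' := by
  rw [mem_children] at hA hA'
  rcases t.laminar A hA.1 A' hA'.1 with h | h | h
  · exact absurd (hA'.2.1) (hA.2.2 A' hA'.1 (h.ssubset_of_ne hne))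
  · exact absurd (hA.2.1) (hA'.2.2 A hA.1 (h.ssubset_of_ne hne.symm))
  · exact h

lemma exists_child_mem {C : Finset X} (hC : C ∈ t.clusters) (h2 : 2 ≤ C.card) {x : X}
    (hx : x ∈ C) : ∃ u ∈ t.children C, x ∈ u := by
  set S := t.clusters.filter (fun B => x ∈ B ∧ B ⊂ C) with hS
  have hSne : S.Nonempty := by
    refine ⟨{x}, ?_⟩
    simp only [hS, mem_filter]
    refine ⟨t.singleton_mem x, by simp, ?_⟩
    constructor
    · simp [hx]
    · intro hsub
      have := Finset.card_le_card hsub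
      simp at this; omega
  obtain ⟨u, huS, humax⟩ := S.exists_max_image Finset.card hSne
  simp only [hS, mem_filter] at huS
  refine ⟨u, ?_, huS.2.1⟩
  rw [mem_children]
  refine ⟨huS.1, huS.2.2, ?_⟩
  intro B hB hub hBC
  have hBS : B ∈ S := by simp only [hS, mem_filter]; exact ⟨hB, hub.subset huS.2.1, hBC⟩
  have := humax B hBS
  have := Finset.card_lt_card hub
  omega

lemma children_eq_pair {C u v : Finset X} (hu : u ∈ t.clusters) (hv : v ∈ t.clusters)
    (hune : u.Nonempty) (hvne : v.Nonempty) (hd : Disjoint u v) (huv : u ∪ v = C) :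
    t.children C = {u, v} := by
  have h2 : 2 ≤ C.card := by
    rw [← huv, Finset.card_union_of_disjoint hd]
    have := Finset.card_pos.2 hune
    have := Finset.card_pos.2 hvne
    omega
  have husub : u ⊂ C := by
    rw [← huv]
    obtain ⟨y, hy⟩ := hvne
    exact Finset.ssubset_iff_of_subset Finset.subset_union_left |>.2
      ⟨y, Finset.mem_union_right _ hy, Finset.disjoint_right.1 hd hy⟩
  have hvsub : v ⊂ C := by
    rw [← huv]
    obtain ⟨y, hy⟩ := hune
    exact Finset.ssubset_iff_of_subset Finset.subset_union_right |>.2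
      ⟨y, Finset.mem_union_left _ hy, Finset.disjoint_left.1 hd hy⟩
  ext A
  simp only [mem_children, Finset.mem_insert, Finset.mem_singleton]
  constructor
  · rintro ⟨hAc, hAC, hAmax⟩
    have hAne : A.Nonempty := t.child_nonempty h2 (t.mem_children.2 ⟨hAc, hAC, hAmax⟩)
    have hAsub : A ⊆ u ∪ v := huv ▸ hAC.subset
    rcases t.laminar A hAc u hu with h | h | h
    · rcases eq_or_ssubset_of_subset h with he | hss
      · exact Or.inl he
      · exact absurd husub (hAmax u hu hss)
    · rcases t.laminar A hAc v hv with h' | h' | h'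
      · exact absurd (hd.mono_right h') (by
          rw [Finset.not_disjoint_iff]
          obtain ⟨y, hy⟩ := hune
          exact ⟨y, hy, h hy⟩)
      · exact absurd (huv ▸ Finset.union_subset h h') (by
          intro hsub; exact hAC.not_subset hsub)
      · -- Disjoint A v, u ⊆ A hence A ⊆ u, so A = u
        left
        exact Finset.Subset.antisymm
          (fun a ha => (Finset.mem_union.1 (hAsub ha)).resolve_right
            (fun hav => Finset.disjoint_left.1 h' ha hav)) h
    · rcases t.laminar A hAc v hv with h' | h' | h'
      · rcases eq_or_ssubset_of_subset h' with he | hss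
        · exact Or.inr he
        · exact absurd hvsub (hAmax v hv hss)
      · right
        exact Finset.Subset.antisymm
          (fun a ha => (Finset.mem_union.1 (hAsub ha)).resolve_left
            (fun hau => Finset.disjoint_left.1 h ha hau)) h'
      · obtain ⟨a, ha⟩ := hAne
        rcases Finset.mem_union.1 (hAsub ha) with hh | hh
        · exact absurd hh (Finset.disjoint_left.1 h ha)
        · exact absurd hh (Finset.disjoint_left.1 h' ha)
  · rintro (rfl | rfl)
    · refine ⟨hu, husub, ?_⟩
      intro B hB hAB hBC
      have hBsub : B ⊆ A ∪ v := huv ▸ hBC.subset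
      rcases t.laminar B hB v hv with h | h | h
      · obtain ⟨y, hy⟩ := hune
        exact absurd (h (hAB.subset hy)) (Finset.disjoint_left.1 hd hy)
      · exact hBC.not_subset (huv ▸ Finset.union_subset hAB.subset h)
      · have : B ⊆ A := fun b hb => (Finset.mem_union.1 (hBsub hb)).resolve_right
          (fun hbv => Finset.disjoint_left.1 h hb hbv)
        exact hAB.not_subset this
    · refine ⟨hv, hvsub, ?_⟩
      intro B hB hAB hBC
      have hBsub : B ⊆ u ∪ A := huv ▸ hBC.subset
      rcases t.laminar B hB u hu with h | h | h
      · obtain ⟨y, hy⟩ := hvne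
        exact absurd (h (hAB.subset hy)) (Finset.disjoint_right.1 hd hy)
      · exact hBC.not_subset (huv ▸ Finset.union_subset h hAB.subset)
      · have : B ⊆ A := fun b hb => (Finset.mem_union.1 (hBsub hb)).resolve_left
          (fun hbu => Finset.disjoint_left.1 h hb hbu)
        exact hAB.not_subset this

lemma offDiag_pair {u v : Finset X} (huv : u ≠ v) :
    ({u, v} : Finset (Finset X)).offDiag = {(u, v), (v, u)} := by
  ext ⟨a, b⟩
  simp only [Finset.mem_offDiag, Finset.mem_insert, Finset.mem_singleton, Prod.mk.injEq]
  constructor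
  · rintro ⟨(rfl | rfl), (rfl | rfl), hne⟩ <;> tauto
  · rintro (⟨rfl, rfl⟩ | ⟨rfl, rfl⟩) <;> tauto

lemma coeff_eq_of_children {x y : X} {C u v : Finset X} (hlca : t.lca x y = C)
    (hch : t.children C = {u, v}) (huv : u ≠ v) :
    t.coeff x y = 1 / (2 * u.card * v.card) := by
  unfold coeff
  rw [hlca, hch, offDiag_pair huv]
  have hne : ((u, v) : Finset X × Finset X) ≠ (v, u) := by
    simp [Prod.ext_iff]; intro h; exact absurd h huv
  rw [Finset.sum_pair hne, Finset.card_pair huv]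
  push_cast
  ring_nf

/-- Structure of the lca of two distinct leaves in a binary tree. -/
lemma binary_lca (ht : t.IsBinary) {x y : X} (hxy : x ≠ y) :
    ∃ u v : Finset X, u ∈ t.clusters ∧ v ∈ t.clusters ∧ u ≠ v ∧ Disjoint u v ∧
      u.Nonempty ∧ v.Nonempty ∧ x ∈ u ∧ y ∈ v ∧ u ∪ v = t.lca x y ∧
      t.coeff x y = 1 / (2 * u.card * v.card) := by
  set L := t.lca x y with hL
  have hLc : L ∈ t.clusters := t.lca_mem x y
  have h2 : 2 ≤ L.card := by
    have : ({x, y} : Finset X) ⊆ L :=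
      Finset.insert_subset (t.left_mem_lca x y)
        (Finset.singleton_subset_iff.2 (t.right_mem_lca x y))
    calc 2 = ({x, y} : Finset X).card := (Finset.card_pair hxy).symm
    _ ≤ L.card := Finset.card_le_card this
  obtain ⟨a, b, hab, hchL⟩ := Finset.card_eq_two.1 (ht L hLc h2)
  have hac : a ∈ t.children L := by rw [hchL]; simp
  have hbc : b ∈ t.children L := by rw [hchL]; simp
  have hdab : Disjoint a b := t.children_disjoint hac hbc hab
  have hane : a.Nonempty := t.child_nonempty h2 hac
  have hbne : b.Nonempty := t.child_nonempty h2 hbc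
  -- x and y lie in children, and in different ones
  obtain ⟨cx, hcx, hxcx⟩ := t.exists_child_mem hLc h2 (t.left_mem_lca x y)
  obtain ⟨cy, hcy, hycy⟩ := t.exists_child_mem hLc h2 (t.right_mem_lca x y)
  have hdiffc : cx ≠ cy := by
    rintro rfl
    have hsub : L ⊆ cx := t.lca_le ((t.mem_children.1 hcx).1) hxcx hycy
    exact ((t.mem_children.1 hcx).2.1.trans_subset hsub).false
  have hcover : a ∪ b = L := by
    apply Finset.Subset.antisymm
    · exact Finset.union_subset (t.mem_children.1 hac).2.1.subset (t.mem_children.1 hbc).2.1.subset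
    · intro z hz
      obtain ⟨u, hu, hzu⟩ := t.exists_child_mem hLc h2 hz
      rw [hchL] at hu
      simp only [Finset.mem_insert, Finset.mem_singleton] at hu
      rcases hu with rfl | rfl
      · exact Finset.mem_union_left _ hzu
      · exact Finset.mem_union_right _ hzu
  have hcoeff := t.coeff_eq_of_children hL.symm hchL hab
  have hcxm : cx = a ∨ cx = b := by
    have := hcx; rw [hchL] at this
    simpa using this
  have hcym : cy = a ∨ cy = b := by
    have := hcy; rw [hchL] at this
    simpa using this
  rcases hcxm with rfl | rfl <;> rcases hcym with rfl | rfl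
  · exact absurd rfl hdiffc
  · exact ⟨cx, cy, (t.mem_children.1 hcx).1, (t.mem_children.1 hcy).1, hab, hdab,
      hane, hbne, hxcx, hycy, hcover, hcoeff⟩
  · refine ⟨cx, cy, (t.mem_children.1 hcx).1, (t.mem_children.1 hcy).1, hab.symm, hdab.symm,
      hbne, hane, hxcx, hycy, ?_, ?_⟩
    · rw [Finset.union_comm]; exact hcover
    · rw [hcoeff]; ring
  · exact absurd rfl hdiffc


lemma binary_children (ht : t.IsBinary) {C : Finset X} (hC : C ∈ t.clusters) (h2 : 2 ≤ C.card) :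
    ∃ u v : Finset X, u ≠ v ∧ t.children C = {u, v} ∧ u ∈ t.clusters ∧ v ∈ t.clusters ∧
      u.Nonempty ∧ v.Nonempty ∧ Disjoint u v ∧ u ∪ v = C := by
  obtain ⟨u, v, huv, hch⟩ := Finset.card_eq_two.1 (ht C hC h2)
  have hu : u ∈ t.children C := by rw [hch]; simp
  have hv : v ∈ t.children C := by rw [hch]; simp
  have hcover : u ∪ v = C := by
    apply Finset.Subset.antisymm
    · exact Finset.union_subset (t.mem_children.1 hu).2.1.subset (t.mem_children.1 hv).2.1.subset
    · intro z hz
      obtain ⟨w, hw, hzw⟩ := t.exists_child_mem hC h2 hz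
      rw [hch] at hw
      simp only [Finset.mem_insert, Finset.mem_singleton] at hw
      rcases hw with rfl | rfl
      · exact Finset.mem_union_left _ hzw
      · exact Finset.mem_union_right _ hzw
  exact ⟨u, v, huv, hch, (t.mem_children.1 hu).1, (t.mem_children.1 hv).1,
    t.child_nonempty h2 hu, t.child_nonempty h2 hv, t.children_disjoint hu hv huv, hcover⟩

lemma internal_count (ht : t.IsBinary) (hX : 2 ≤ Fintype.card X) :
    (t.clusters.filter (fun C => 2 ≤ C.card)).card = Fintype.card X - 1 := by
  classical
  set I := t.clusters.filter (fun C => 2 ≤ C.card) with hI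
  set N := t.clusters.filter (fun A => A.Nonempty ∧ A ≠ Finset.univ) with hN
  have huI : (Finset.univ : Finset X) ∈ I := by
    rw [hI, mem_filter]
    exact ⟨t.top_mem, by simpa using hX⟩
  have hNI : N = I.biUnion (fun C => t.children C) := by
    ext A
    simp only [hN, hI, mem_filter, Finset.mem_biUnion]
    constructor
    · rintro ⟨hAc, hAne, hAuniv⟩
      obtain ⟨P, hPS, hPmin⟩ := Finset.exists_min_image
        (t.clusters.filter (fun B => A ⊂ B)) Finset.card
        ⟨Finset.univ, by simp [mem_filter, t.top_mem, Finset.ssubset_univ_iff.2 hAuniv]⟩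
      rw [mem_filter] at hPS
      refine ⟨P, ⟨hPS.1, ?_⟩, ?_⟩
      · have h1 : 1 ≤ A.card := Finset.card_pos.2 hAne
        have h2 : A.card < P.card := Finset.card_lt_card hPS.2
        omega
      · rw [mem_children]
        refine ⟨hAc, hPS.2, ?_⟩
        intro B hB hAB hBP
        have := hPmin B (by rw [mem_filter]; exact ⟨hB, hAB⟩)
        have := Finset.card_lt_card hBP
        omega
    · rintro ⟨C, ⟨hCc, hC2⟩, hACh⟩
      have hm := t.mem_children.1 hACh
      refine ⟨hm.1, t.child_nonempty hC2 hACh, ?_⟩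
      exact (hm.2.1.trans_subset (Finset.subset_univ C)).ne
  have hdisj : ∀ C ∈ I, ∀ C' ∈ I, C ≠ C' → Disjoint (t.children C) (t.children C') := by
    intro C hC C' hC' hne
    rw [Finset.disjoint_left]
    intro A hA hA'
    rw [hI, mem_filter] at hC hC'
    have hAne : A.Nonempty := t.child_nonempty hC.2 hA
    have hmA := t.mem_children.1 hA
    have hmA' := t.mem_children.1 hA'
    rcases t.laminar C hC.1 C' hC'.1 with h | h | h
    · exact hmA'.2.2 C hC.1 hmA.2.1 (h.ssubset_of_ne hne)
    · exact hmA.2.2 C' hC'.1 hmA'.2.1 (h.ssubset_of_ne hne.symm)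
    · obtain ⟨a, ha⟩ := hAne
      exact (Finset.disjoint_left.1 h (hmA.2.1.subset ha)) (hmA'.2.1.subset ha)
  have hcard1 : N.card = 2 * I.card := by
    rw [hNI, Finset.card_biUnion hdisj]
    have h2' : ∀ C ∈ I, (t.children C).card = 2 := by
      intro C hCI
      rw [hI, mem_filter] at hCI
      exact ht C hCI.1 hCI.2
    rw [Finset.sum_congr rfl h2', Finset.sum_const, smul_eq_mul, mul_comm]
  have hsplit : N = (I.erase Finset.univ) ∪ Finset.univ.image (fun x : X => ({x} : Finset X)) := by
    ext A
    simp only [hN, hI, mem_filter, Finset.mem_union, Finset.mem_erase, Finset.mem_image]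
    constructor
    · rintro ⟨hAc, hAne, hAuniv⟩
      rcases Nat.lt_or_ge A.card 2 with hlt | hge
      · have h1 : A.card = 1 := by
          have := Finset.card_pos.2 hAne; omega
        obtain ⟨x, hx⟩ := Finset.card_eq_one.1 h1
        exact Or.inr ⟨x, Finset.mem_univ x, hx.symm⟩
      · exact Or.inl ⟨hAuniv, hAc, hge⟩
    · rintro (⟨hAuniv, hAc, hge⟩ | ⟨x, _, rfl⟩)
      · exact ⟨hAc, Finset.card_pos.1 (by omega), hAuniv⟩
      · refine ⟨t.singleton_mem x, Finset.singleton_nonempty x, ?_⟩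
        intro h
        have : ({x} : Finset X).card = Fintype.card X := by rw [h, Finset.card_univ]
        simp at this
        omega
  have hdisj2 : Disjoint (I.erase Finset.univ)
      (Finset.univ.image (fun x : X => ({x} : Finset X))) := by
    rw [Finset.disjoint_left]
    intro A hA hA'
    rw [Finset.mem_erase, hI, mem_filter] at hA
    obtain ⟨x, _, rfl⟩ := Finset.mem_image.1 hA'
    simp at hA
  have hcard2 : N.card = (I.card - 1) + Fintype.card X := by
    rw [hsplit, Finset.card_union_of_disjoint hdisj2, Finset.card_erase_of_mem huI,
      Finset.card_image_of_injective _ Finset.singleton_injective, Finset.card_univ]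
  have hIpos : 1 ≤ I.card := Finset.card_pos.2 ⟨Finset.univ, huI⟩
  omega

lemma sum_coeff (ht : t.IsBinary) (hX : 2 ≤ Fintype.card X) :
    ∑ p ∈ (Finset.univ : Finset X).offDiag, t.coeff p.1 p.2 = (Fintype.card X : ℝ) - 1 := by
  classical
  set I := t.clusters.filter (fun C => 2 ≤ C.card) with hI
  have hmaps : ∀ p ∈ (Finset.univ : Finset X).offDiag, t.lca p.1 p.2 ∈ I := by
    intro p hp
    rw [Finset.mem_offDiag] at hp
    rw [hI, mem_filter]
    refine ⟨t.lca_mem _ _, ?_⟩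
    have hsub : ({p.1, p.2} : Finset X) ⊆ t.lca p.1 p.2 :=
      Finset.insert_subset (t.left_mem_lca _ _)
        (Finset.singleton_subset_iff.2 (t.right_mem_lca _ _))
    calc 2 = ({p.1, p.2} : Finset X).card := (Finset.card_pair hp.2.2).symm
    _ ≤ _ := Finset.card_le_card hsub
  have step1 := (Finset.sum_fiberwise_of_maps_to hmaps (fun p => t.coeff p.1 p.2)).symm
  rw [step1]
  have step2 : ∀ C ∈ I, ∑ p ∈ (Finset.univ : Finset X).offDiag.filter
      (fun p => t.lca p.1 p.2 = C), t.coeff p.1 p.2 = 1 := by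
    intro C hC
    rw [hI, mem_filter] at hC
    obtain ⟨u, v, huv, hch, huc, hvc, hune, hvne, hd, hcover⟩ :=
      t.binary_children ht hC.1 hC.2
    have key : ∀ a ∈ t.children C, ∀ b ∈ t.children C, a ≠ b →
        ∀ x ∈ a, ∀ y ∈ b, t.lca x y = C := by
      intro a ha b hb hab x hx y hy
      have hma := t.mem_children.1 ha
      have hmb := t.mem_children.1 hb
      have hxC : x ∈ C := hma.2.1.subset hx
      have hyC : y ∈ C := hmb.2.1.subset hy
      have hlsub : t.lca x y ⊆ C := t.lca_le hC.1 hxC hyC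
      have hd' : Disjoint a b := t.children_disjoint ha hb hab
      have hasub : a ⊂ t.lca x y := by
        rcases t.laminar a hma.1 (t.lca x y) (t.lca_mem x y) with h | h | h
        · refine h.ssubset_of_ne ?_
          rintro rfl
          exact (Finset.disjoint_left.1 hd' (t.right_mem_lca x y)) hy
        · exact absurd (h (t.right_mem_lca x y)) (fun q => Finset.disjoint_left.1 hd' q hy)
        · exact absurd hx (fun q => Finset.disjoint_left.1 h q (t.left_mem_lca x y))
      rcases eq_or_ssubset_of_subset hlsub with he | hss
      · exact he
      · exact absurd hss (hma.2.2 _ (t.lca_mem x y) hasub)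
    have hfiber : (Finset.univ : Finset X).offDiag.filter (fun p => t.lca p.1 p.2 = C)
        = u ×ˢ v ∪ v ×ˢ u := by
      ext ⟨x, y⟩
      simp only [Finset.mem_filter, Finset.mem_offDiag, Finset.mem_union, Finset.mem_product,
        Finset.mem_univ, true_and]
      constructor
      · rintro ⟨hxy, hl⟩
        obtain ⟨cx, hcx, hxcx⟩ := t.exists_child_mem hC.1 hC.2 (hl ▸ t.left_mem_lca x y)
        obtain ⟨cy, hcy, hycy⟩ := t.exists_child_mem hC.1 hC.2 (hl ▸ t.right_mem_lca x y)
        have hne : cx ≠ cy := by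
          rintro rfl
          have hsub : t.lca x y ⊆ cx := t.lca_le (t.mem_children.1 hcx).1 hxcx hycy
          rw [hl] at hsub
          exact ((t.mem_children.1 hcx).2.1.trans_subset hsub).false
        have hcx' : cx = u ∨ cx = v := by have := hcx; rw [hch] at this; simpa using this
        have hcy' : cy = u ∨ cy = v := by have := hcy; rw [hch] at this; simpa using this
        rcases hcx' with rfl | rfl <;> rcases hcy' with rfl | rfl
        · exact absurd rfl hne
        · exact Or.inl ⟨hxcx, hycy⟩
        · exact Or.inr ⟨hxcx, hycy⟩
        · exact absurd rfl hne
      · have hu' : u ∈ t.children C := by rw [hch]; simp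
        have hv' : v ∈ t.children C := by rw [hch]; simp
        rintro (⟨hxu, hyv⟩ | ⟨hxv, hyu⟩)
        · exact ⟨fun h => Finset.disjoint_left.1 hd (h ▸ hxu) hyv,
            key u hu' v hv' huv x hxu y hyv⟩
        · exact ⟨fun h => Finset.disjoint_left.1 hd (h ▸ hyu) hxv,
            key v hv' u hu' huv.symm x hxv y hyu⟩
    have hconst : ∀ p ∈ (Finset.univ : Finset X).offDiag.filter (fun p => t.lca p.1 p.2 = C),
        t.coeff p.1 p.2 = 1 / (2 * u.card * v.card) := by
      intro p hp
      rw [Finset.mem_filter] at hp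
      exact t.coeff_eq_of_children hp.2 hch huv
    rw [Finset.sum_congr rfl hconst, Finset.sum_const, hfiber]
    have hdisjp : Disjoint (u ×ˢ v) (v ×ˢ u) := by
      rw [Finset.disjoint_left]
      rintro ⟨x, y⟩ h h'
      rw [Finset.mem_product] at h h'
      exact Finset.disjoint_left.1 hd h.1 h'.1
    rw [Finset.card_union_of_disjoint hdisjp, Finset.card_product, Finset.card_product]
    have hu0 : 0 < u.card := Finset.card_pos.2 hune
    have hv0 : 0 < v.card := Finset.card_pos.2 hvne
    rw [nsmul_eq_mul]
    push_cast
    field_simp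
    ring
  rw [Finset.sum_congr rfl step2, Finset.sum_const, nsmul_eq_mul, mul_one,
    hI, t.internal_count ht hX]
  rw [Nat.cast_sub (by omega)]
  simp
/-! ### The caterpillar tree construction -/

noncomputable def sideClusters (S : Finset X) : Finset (Finset X) :=
  (Finset.range S.card).image (fun i => (S.toList.take (i + 1)).toFinset)

omit [Fintype X] in
lemma mem_sideClusters {S P : Finset X} :
    P ∈ sideClusters S ↔ ∃ i < S.card, P = (S.toList.take (i + 1)).toFinset := by
  simp only [sideClusters, Finset.mem_image, Finset.mem_range]
  constructor
  · rintro ⟨i, hi, rfl⟩; exact ⟨i, hi, rfl⟩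
  · rintro ⟨i, hi, rfl⟩; exact ⟨i, hi, rfl⟩

omit [Fintype X] in
lemma take_toFinset_subset (S : Finset X) (n : ℕ) : (S.toList.take n).toFinset ⊆ S := by
  intro x hx
  rw [List.mem_toFinset] at hx
  exact Finset.mem_toList.1 (List.take_subset _ _ hx)

omit [Fintype X] in
lemma take_toFinset_card (S : Finset X) (n : ℕ) :
    (S.toList.take n).toFinset.card = min n S.card := by
  rw [List.toFinset_card_of_nodup ((List.take_sublist _ _).nodup S.nodup_toList),
    List.length_take, Finset.length_toList]

omit [Fintype X] in
lemma take_toFinset_mono (S : Finset X) {i j : ℕ} (h : i ≤ j) :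
    (S.toList.take i).toFinset ⊆ (S.toList.take j).toFinset := by
  intro x hx
  rw [List.mem_toFinset] at hx ⊢
  have : S.toList.take i = (S.toList.take j).take i := by
    rw [List.take_take, min_eq_left h]
  rw [this] at hx
  exact List.take_subset _ _ hx

omit [Fintype X] in
lemma take_toFinset_succ (S : Finset X) {i : ℕ} (hi : i < S.card) :
    (S.toList.take (i + 1)).toFinset
      = insert (S.toList[i]'(by rwa [Finset.length_toList])) (S.toList.take i).toFinset := by
  rw [List.take_succ, List.toFinset_append,
    List.getElem?_eq_getElem (by rwa [Finset.length_toList])]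
  ext x; simp [or_comm]

omit [Fintype X] in
lemma getElem_not_mem_take (S : Finset X) {i : ℕ} (hi : i < S.toList.length) :
    S.toList[i] ∉ (S.toList.take i).toFinset := by
  intro hmem
  rw [List.mem_toFinset] at hmem
  have hnd := S.nodup_toList
  rw [← List.take_append_drop i S.toList, List.nodup_append] at hnd
  refine hnd.2.2 _ hmem _ ?_ rfl
  rw [List.drop_eq_getElem_cons hi]
  exact List.mem_cons_self ..

omit [Fintype X] in
lemma self_mem_sideClusters {S : Finset X} (h1 : 1 ≤ S.card) : S ∈ sideClusters S := by
  rw [mem_sideClusters]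
  refine ⟨S.card - 1, by omega, ?_⟩
  have : S.card - 1 + 1 = S.card := by omega
  rw [this, ← Finset.length_toList, List.take_length, Finset.toList_toFinset]

omit [Fintype X] in
lemma sideClusters_subset {S P : Finset X} (hP : P ∈ sideClusters S) : P ⊆ S := by
  obtain ⟨i, _, rfl⟩ := mem_sideClusters.1 hP
  exact take_toFinset_subset S _

/-- The caterpillar tree with top split `V`, `Vᶜ`. -/
noncomputable def catTree (V : Finset X) : RPhyloTree X where
  clusters := (sideClusters V ∪ sideClusters Vᶜ ∪ {Finset.univ})
      ∪ Finset.univ.image (fun x : X => ({x} : Finset X))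
  top_mem := by simp
  singleton_mem := fun x => by simp
  laminar := by
    have hsingle : ∀ (x : X) (P : Finset X), ({x} : Finset X) ⊆ P ∨ P ⊆ {x} ∨ Disjoint ({x} : Finset X) P := by
      intro x P
      by_cases hx : x ∈ P
      · exact Or.inl (Finset.singleton_subset_iff.2 hx)
      · exact Or.inr (Or.inr (Finset.disjoint_singleton_left.2 hx))
    have hside : ∀ S C D : Finset X, C ∈ sideClusters S → D ∈ sideClusters S →
        C ⊆ D ∨ D ⊆ C ∨ Disjoint C D := by
      intro S Cs Ds hC hD
      obtain ⟨i, _, rfl⟩ := mem_sideClusters.1 hC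
      obtain ⟨j, _, rfl⟩ := mem_sideClusters.1 hD
      rcases Nat.le_or_le i j with h | h
      · exact Or.inl (take_toFinset_mono S (by omega))
      · exact Or.inr (Or.inl (take_toFinset_mono S (by omega)))
    have cross : ∀ P Q : Finset X, P ∈ sideClusters V → Q ∈ sideClusters Vᶜ →
        Disjoint P Q := fun P Q hP hQ => Finset.disjoint_left.2 (fun a ha hb =>
      (Finset.mem_compl.1 (sideClusters_subset hQ hb)) (sideClusters_subset hP ha))
    intro Cs hC Ds hD
    simp only [Finset.mem_union, Finset.mem_singleton, Finset.mem_image] at hC hD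
    rcases hC with ((hC | hC) | rfl) | ⟨x, _, rfl⟩
    · rcases hD with ((hD | hD) | rfl) | ⟨y, _, rfl⟩
      · exact hside V Cs Ds hC hD
      · exact Or.inr (Or.inr (cross _ _ hC hD))
      · exact Or.inl (Finset.subset_univ _)
      · rcases hsingle y Cs with h | h | h
        · exact Or.inr (Or.inl h)
        · exact Or.inl h
        · exact Or.inr (Or.inr h.symm)
    · rcases hD with ((hD | hD) | rfl) | ⟨y, _, rfl⟩
      · exact Or.inr (Or.inr (cross _ _ hD hC).symm)
      · exact hside Vᶜ Cs Ds hC hD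
      · exact Or.inl (Finset.subset_univ _)
      · rcases hsingle y Cs with h | h | h
        · exact Or.inr (Or.inl h)
        · exact Or.inl h
        · exact Or.inr (Or.inr h.symm)
    · rcases hD with ((hD | hD) | rfl) | ⟨y, _, rfl⟩
      · exact Or.inr (Or.inl (Finset.subset_univ _))
      · exact Or.inr (Or.inl (Finset.subset_univ _))
      · exact Or.inl (Finset.Subset.refl _)
      · exact Or.inr (Or.inl (Finset.subset_univ _))
    · exact hsingle x Ds
lemma mem_catTree {V P : Finset X} :
    P ∈ (catTree V).clusters ↔
      P ∈ sideClusters V ∨ P ∈ sideClusters Vᶜ ∨ P = Finset.univ ∨ ∃ x, P = {x} := by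
  show P ∈ (sideClusters V ∪ sideClusters Vᶜ ∪ {Finset.univ})
      ∪ Finset.univ.image (fun x : X => ({x} : Finset X)) ↔ _
  simp only [Finset.mem_union, Finset.mem_singleton, Finset.mem_image, Finset.mem_univ,
    true_and]
  constructor
  · rintro (((h | h) | h) | ⟨x, hx⟩)
    · exact Or.inl h
    · exact Or.inr (Or.inl h)
    · exact Or.inr (Or.inr (Or.inl h))
    · exact Or.inr (Or.inr (Or.inr ⟨x, hx.symm⟩))
  · rintro (h | h | h | ⟨x, hx⟩)
    · exact Or.inl (Or.inl (Or.inl h))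
    · exact Or.inl (Or.inl (Or.inr h))
    · exact Or.inl (Or.inr h)
    · exact Or.inr ⟨x, hx.symm⟩

lemma catTree_children_side {V S P : Finset X}
    (hS : sideClusters S ⊆ (catTree V).clusters)
    (hP : P ∈ sideClusters S) (h2 : 2 ≤ P.card) :
    ((catTree V).children P).card = 2 := by
  obtain ⟨i, hi, rfl⟩ := mem_sideClusters.1 hP
  have hcard : (S.toList.take (i + 1)).toFinset.card = i + 1 := by
    rw [take_toFinset_card]; omega
  have hi1 : 1 ≤ i := by rw [hcard] at h2; omega
  have hil : i < S.toList.length := by rw [Finset.length_toList]; omega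
  set a := S.toList[i]'hil with ha
  set u := (S.toList.take i).toFinset with hu
  have hieq : i - 1 + 1 = i := by omega
  have huS : u ∈ sideClusters S := mem_sideClusters.2 ⟨i - 1, by omega, by rw [hieq]⟩
  have hanotu : a ∉ u := getElem_not_mem_take S hil
  have hune : u.Nonempty := by
    rw [← Finset.card_pos, hu, take_toFinset_card]
    omega
  have hsucc : u ∪ {a} = (S.toList.take (i + 1)).toFinset := by
    rw [take_toFinset_succ S (by omega : i < S.card)]
    rw [Finset.union_comm]
    rfl
  have hne : u ≠ ({a} : Finset X) := by
    intro h
    exact hanotu (h ▸ Finset.mem_singleton_self a)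
  rw [(catTree V).children_eq_pair (hS huS) ((catTree V).singleton_mem a) hune
    (Finset.singleton_nonempty a) (Finset.disjoint_singleton_right.2 hanotu) hsucc]
  exact Finset.card_pair hne

lemma compl_ne_self {V : Finset X} (hV : V.Nonempty) : V ≠ Vᶜ := by
  intro h
  obtain ⟨x, hx⟩ := hV
  exact (Finset.mem_compl.1 (h ▸ hx)) hx

lemma catTree_children_univ {V : Finset X} (hV : 1 ≤ V.card) (hVc : 1 ≤ Vᶜ.card) :
    (catTree V).children Finset.univ = {V, Vᶜ} := by
  have hVne : V.Nonempty := Finset.card_pos.1 hV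
  have hVcne : Vᶜ.Nonempty := Finset.card_pos.1 hVc
  have hVmem : V ∈ (catTree V).clusters :=
    mem_catTree.2 (Or.inl (self_mem_sideClusters hV))
  have hVcmem : Vᶜ ∈ (catTree V).clusters :=
    mem_catTree.2 (Or.inr (Or.inl (self_mem_sideClusters hVc)))
  exact (catTree V).children_eq_pair hVmem hVcmem hVne hVcne disjoint_compl_right
    (Finset.union_compl V)

lemma catTree_isBinary {V : Finset X} (hV : 1 ≤ V.card) (hVc : 1 ≤ Vᶜ.card) :
    (catTree V).IsBinary := by
  intro P hP h2
  rcases mem_catTree.1 hP with h | h | rfl | ⟨x, rfl⟩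
  · exact catTree_children_side (fun Q hQ => mem_catTree.2 (Or.inl hQ)) h h2
  · exact catTree_children_side (fun Q hQ => mem_catTree.2 (Or.inr (Or.inl hQ))) h h2
  · rw [catTree_children_univ hV hVc]
    exact Finset.card_pair (compl_ne_self (Finset.card_pos.1 hV))
  · simp at h2

lemma catTree_lca {V : Finset X} {x y : X} (hx : x ∈ V) (hy : y ∉ V) :
    (catTree V).lca x y = Finset.univ := by
  obtain ⟨hc, hxl, hyl⟩ := (catTree V).lca_spec x y
  rcases mem_catTree.1 hc with h | h | h | ⟨z, h⟩
  · exact absurd (sideClusters_subset h hyl) hy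
  · exact absurd hx (Finset.mem_compl.1 (sideClusters_subset h hxl))
  · exact h
  · rw [h] at hxl hyl
    rw [Finset.mem_singleton] at hxl hyl
    exact absurd (hyl ▸ hxl ▸ hx) hy

lemma catTree_coeff {V : Finset X} {x y : X} (hV : 1 ≤ V.card) (hVc : 1 ≤ Vᶜ.card)
    (hx : x ∈ V) (hy : y ∉ V) :
    (catTree V).coeff x y = 1 / (2 * V.card * Vᶜ.card) :=
  (catTree V).coeff_eq_of_children (catTree_lca hx hy) (catTree_children_univ hV hVc)
    (compl_ne_self (Finset.card_pos.1 hV))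
lemma coeff_comm (x y : X) : t.coeff x y = t.coeff y x := by
  unfold coeff
  rw [t.lca_comm x y]

lemma coeff_nonneg (ht : t.IsBinary) {x y : X} (hxy : x ≠ y) : 0 ≤ t.coeff x y := by
  obtain ⟨u, v, _, _, _, _, hune, hvne, _, _, _, hcoeff⟩ := t.binary_lca ht hxy
  rw [hcoeff]
  have h1 : (0:ℝ) < u.card := by exact_mod_cast Finset.card_pos.2 hune
  have h2 : (0:ℝ) < v.card := by exact_mod_cast Finset.card_pos.2 hvne
  positivity
end RPhyloTree

set_option maxHeartbeats 1000000 in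
open RPhyloTree in
/-- The gadget lemma of the NP-hardness proof: if `X` has `2(m+k)` elements partitioned
into `A`, `B`, `C` with `|A| = |B| = m` and `|C| = 2k`, and a dissimilarity `D` gives
distance `s > 0` between `A` and `B` and at most `s/(3(m+k)⁵)` to all other pairs, then
any binary rooted phylogenetic tree minimizing the NEME score contains two distinct
vertices `v, w` with disjoint clusters of size `m+k` such that `A ⊆ C(v)`, `B ⊆ C(w)`. -/
theorem stmt13 {X : Type*} [Fintype X] [DecidableEq X]
    (m k : ℕ) (hm : 1 ≤ m) (hk : 1 ≤ k) (hcard : Fintype.card X = 2 * (m + k))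
    (A B C : Finset X) (hA : A.card = m) (hB : B.card = m) (hC : C.card = 2 * k)
    (hAB : Disjoint A B) (hAC : Disjoint A C) (hBC : Disjoint B C)
    (hcover : A ∪ B ∪ C = Finset.univ)
    (s : ℝ) (hs : 0 < s) (D : X → X → ℝ) (hdis : IsDissimilarity D)
    (hDs : ∀ x ∈ A, ∀ y ∈ B, D x y = s)
    (hDsmall : ∀ x y : X, x ≠ y → ¬ (x ∈ A ∧ y ∈ B) → ¬ (x ∈ B ∧ y ∈ A) →
      D x y ≤ s / (3 * ((m : ℝ) + k) ^ 5))
    (hDnonneg : ∀ x y, 0 ≤ D x y)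
    (T : RPhyloTree X) (hTbin : T.IsBinary)
    (hTopt : ∀ T' : RPhyloTree X, T'.IsBinary → T.score D ≤ T'.score D) :
    ∃ v w : Finset X, v ∈ T.clusters ∧ w ∈ T.clusters ∧ v ≠ w ∧
      Disjoint v w ∧ v.card = m + k ∧ w.card = m + k ∧ A ⊆ v ∧ B ⊆ w := by
  classical
  set n := m + k with hn
  set nn : ℝ := (n : ℝ) with hnn
  have hn2 : 2 ≤ n := by omega
  have hnn2 : (2:ℝ) ≤ nn := by rw [hnn]; exact_mod_cast hn2
  have hnnpos : (0:ℝ) < nn := by linarith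
  have hXcard2 : 2 ≤ Fintype.card X := by omega
  have hcastmk : ((m : ℝ) + k) = nn := by rw [hnn, hn]; push_cast; ring
  -- choose the balanced split V
  obtain ⟨C1, hC1sub, hC1card⟩ := Finset.exists_subset_card_eq (s := C) (n := k) (by omega)
  set V := A ∪ C1 with hV
  have hAC1 : Disjoint A C1 := hAC.mono_right hC1sub
  have hVcard : V.card = n := by
    rw [hV, Finset.card_union_of_disjoint hAC1, hA, hC1card]
  have hVccard : Vᶜ.card = n := by
    rw [Finset.card_compl, hVcard, hcard]; omega
  have hBV : Disjoint B V := by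
    rw [hV, Finset.disjoint_union_right]
    exact ⟨hAB.symm, hBC.mono_right hC1sub⟩
  have hAsubV : A ⊆ V := Finset.subset_union_left
  have hBnotV : ∀ y ∈ B, y ∉ V := fun y hy => Finset.disjoint_left.1 hBV hy
  have hABne : ∀ x ∈ A, ∀ y ∈ B, x ≠ y :=
    fun x hx y hy he => Finset.disjoint_left.1 hAB hx (he ▸ hy)
  -- the set of (A,B) pairs
  set pred := fun p : X × X => (p.1 ∈ A ∧ p.2 ∈ B) ∨ (p.1 ∈ B ∧ p.2 ∈ A) with hpred
  set PAB := (Finset.univ : Finset X).offDiag.filter pred with hPAB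
  have hPABeq : PAB = A ×ˢ B ∪ B ×ˢ A := by
    ext ⟨x, y⟩
    simp only [hPAB, hpred, Finset.mem_filter, Finset.mem_offDiag, Finset.mem_univ, true_and,
      Finset.mem_union, Finset.mem_product]
    constructor
    · rintro ⟨-, h⟩; exact h
    · rintro (⟨hx, hy⟩ | ⟨hx, hy⟩)
      · exact ⟨hABne x hx y hy, Or.inl ⟨hx, hy⟩⟩
      · exact ⟨(hABne y hy x hx).symm, Or.inr ⟨hx, hy⟩⟩
  have hPABcard : PAB.card = 2 * (m * m) := by
    rw [hPABeq, Finset.card_union_of_disjoint, Finset.card_product, Finset.card_product,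
      hA, hB]
    · ring
    · rw [Finset.disjoint_left]
      rintro ⟨x, y⟩ h h'
      rw [Finset.mem_product] at h h'
      exact Finset.disjoint_left.1 hAB h.1 h'.1
  have hDPAB : ∀ p ∈ PAB, D p.1 p.2 = s := by
    rintro ⟨x, y⟩ hp
    rw [hPAB, Finset.mem_filter] at hp
    rcases hp.2 with ⟨hx, hy⟩ | ⟨hx, hy⟩
    · exact hDs x hx y hy
    · rw [hdis.1]; exact hDs y hy x hx
  have hDrest : ∀ p ∈ (Finset.univ : Finset X).offDiag.filter (fun p => ¬ pred p),
      D p.1 p.2 ≤ s / (3 * nn ^ 5) := by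
    rintro ⟨x, y⟩ hp
    rw [Finset.mem_filter, Finset.mem_offDiag] at hp
    have hnp : ¬ pred (x, y) := hp.2
    rw [hpred] at hnp
    simp only [not_or, not_and] at hnp
    rw [← hcastmk]
    exact hDsmall x y hp.1.2.2 (fun h => hnp.1 h.1 h.2) (fun h => hnp.2 h.1 h.2)
  -- score decomposition
  have hsplit : ∀ t : RPhyloTree X, t.score D = (1/2) *
      ((∑ p ∈ PAB, t.coeff p.1 p.2 * D p.1 p.2) +
       ∑ p ∈ (Finset.univ : Finset X).offDiag.filter (fun p => ¬ pred p),
         t.coeff p.1 p.2 * D p.1 p.2) := by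
    intro t
    rw [RPhyloTree.score, hPAB, Finset.sum_filter_add_sum_filter_not]
  -- nonnegativity / upper bound of the rest sum, for any binary tree
  have hrest_nonneg : ∀ t : RPhyloTree X, t.IsBinary →
      0 ≤ ∑ p ∈ (Finset.univ : Finset X).offDiag.filter (fun p => ¬ pred p),
        t.coeff p.1 p.2 * D p.1 p.2 := by
    intro t ht
    apply Finset.sum_nonneg
    rintro ⟨x, y⟩ hp
    have hne : x ≠ y := (Finset.mem_offDiag.1 (Finset.mem_of_mem_filter _ hp)).2.2
    exact mul_nonneg (t.coeff_nonneg ht hne) (hDnonneg x y)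
  have hrest_le : ∀ t : RPhyloTree X, t.IsBinary →
      (∑ p ∈ (Finset.univ : Finset X).offDiag.filter (fun p => ¬ pred p),
        t.coeff p.1 p.2 * D p.1 p.2) ≤ s / (3 * nn ^ 5) * (2 * nn - 1) := by
    intro t ht
    have heps : 0 ≤ s / (3 * nn ^ 5) := by positivity
    calc (∑ p ∈ (Finset.univ : Finset X).offDiag.filter (fun p => ¬ pred p),
          t.coeff p.1 p.2 * D p.1 p.2)
        ≤ ∑ p ∈ (Finset.univ : Finset X).offDiag.filter (fun p => ¬ pred p),
          t.coeff p.1 p.2 * (s / (3 * nn ^ 5)) := by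
          apply Finset.sum_le_sum
          rintro ⟨x, y⟩ hp
          have hne : x ≠ y := (Finset.mem_offDiag.1 (Finset.mem_of_mem_filter _ hp)).2.2
          exact mul_le_mul_of_nonneg_left (hDrest _ hp) (t.coeff_nonneg ht hne)
      _ = (s / (3 * nn ^ 5)) * ∑ p ∈ (Finset.univ : Finset X).offDiag.filter
            (fun p => ¬ pred p), t.coeff p.1 p.2 := by
          rw [Finset.mul_sum]; exact Finset.sum_congr rfl (fun p _ => mul_comm _ _)
      _ ≤ (s / (3 * nn ^ 5)) * (2 * nn - 1) := by
          apply mul_le_mul_of_nonneg_left _ heps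
          calc (∑ p ∈ (Finset.univ : Finset X).offDiag.filter (fun p => ¬ pred p),
                t.coeff p.1 p.2)
              ≤ ∑ p ∈ (Finset.univ : Finset X).offDiag, t.coeff p.1 p.2 := by
                apply Finset.sum_le_sum_of_subset_of_nonneg (Finset.filter_subset _ _)
                rintro ⟨x, y⟩ hp _
                exact t.coeff_nonneg ht (Finset.mem_offDiag.1 hp).2.2
            _ = (Fintype.card X : ℝ) - 1 := t.sum_coeff ht hXcard2
            _ = 2 * nn - 1 := by rw [hcard, hnn, hn]; push_cast; ring
  -- upper bound on the optimal score, via the caterpillar tree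
  have hcat := catTree_isBinary (X := X) (V := V) (by omega) (by omega)
  have hcatcoeff : ∀ p ∈ PAB, (catTree V).coeff p.1 p.2 = 1 / (2 * nn ^ 2) := by
    rintro ⟨x, y⟩ hp
    rw [hPAB, Finset.mem_filter] at hp
    have hval : ∀ a b : X, a ∈ A → b ∈ B →
        (catTree V).coeff a b = 1 / (2 * nn ^ 2) := by
      intro a b ha hb
      rw [catTree_coeff (by omega) (by omega) (hAsubV ha) (hBnotV b hb), hVcard, hVccard,
        hnn]
      ring
    rcases hp.2 with ⟨hx, hy⟩ | ⟨hx, hy⟩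
    · exact hval x y hx hy
    · rw [RPhyloTree.coeff_comm]; exact hval y x hy hx
  have hupper : T.score D ≤ (1/2) * ((PAB.card : ℝ) * (1 / (2 * nn ^ 2) * s)
      + s / (3 * nn ^ 5) * (2 * nn - 1)) := by
    calc T.score D ≤ (catTree V).score D := hTopt _ hcat
      _ = (1/2) * ((∑ p ∈ PAB, (catTree V).coeff p.1 p.2 * D p.1 p.2) +
          ∑ p ∈ (Finset.univ : Finset X).offDiag.filter (fun p => ¬ pred p),
            (catTree V).coeff p.1 p.2 * D p.1 p.2) := hsplit _
      _ ≤ (1/2) * ((PAB.card : ℝ) * (1 / (2 * nn ^ 2) * s)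
          + s / (3 * nn ^ 5) * (2 * nn - 1)) := by
          apply mul_le_mul_of_nonneg_left _ (by norm_num)
          apply add_le_add
          · apply le_of_eq
            rw [Finset.sum_congr rfl (fun p hp => by
              rw [hcatcoeff p hp, hDPAB p hp])]
            rw [Finset.sum_const, nsmul_eq_mul]
          · exact hrest_le _ hcat
  -- lower bounds on coefficients of T on PAB pairs
  have hsum_ub : ∀ {u v : Finset X}, Disjoint u v → u ∪ v ⊆ Finset.univ →
      u.card + v.card ≤ 2 * n := by
    intro u v hd hsub
    have := Finset.card_le_card hsub
    rw [Finset.card_union_of_disjoint hd, Finset.card_univ, hcard] at this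
    omega
  have hlowerAll : ∀ p ∈ PAB, 1 / (2 * nn ^ 2) ≤ T.coeff p.1 p.2 := by
    rintro ⟨x, y⟩ hp
    have hne : x ≠ y := (Finset.mem_offDiag.1 (Finset.mem_of_mem_filter _ hp)).2.2
    obtain ⟨u, v, _, _, _, hd, hune, hvne, _, _, hcov, hcoeff⟩ := T.binary_lca hTbin hne
    have hle : u.card + v.card ≤ 2 * n := hsum_ub hd (hcov ▸ Finset.subset_univ _)
    have hle' : (u.card : ℝ) + v.card ≤ 2 * nn := by rw [hnn]; exact_mod_cast hle
    have hu1 : (1:ℝ) ≤ u.card := by exact_mod_cast Finset.card_pos.2 hune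
    have hv1 : (1:ℝ) ≤ v.card := by exact_mod_cast Finset.card_pos.2 hvne
    rw [hcoeff]
    rw [div_le_div_iff₀ (by positivity) (by positivity)]
    nlinarith [sq_nonneg ((u.card : ℝ) - v.card),
      mul_self_le_mul_self (by positivity : (0:ℝ) ≤ (u.card : ℝ) + v.card) hle']
  -- main structural claim
  have main : ∀ x ∈ A, ∀ y ∈ B, ∃ u v : Finset X, u ∈ T.clusters ∧ v ∈ T.clusters ∧
      u ≠ v ∧ Disjoint u v ∧ x ∈ u ∧ y ∈ v ∧ u ∪ v = T.lca x y ∧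
      u.card = n ∧ v.card = n := by
    intro x hx y hy
    have hne : x ≠ y := hABne x hx y hy
    obtain ⟨u, v, huc, hvc, huv, hd, hune, hvne, hxu, hyv, hcov, hcoeff⟩ :=
      T.binary_lca hTbin hne
    have hle : u.card + v.card ≤ 2 * n := hsum_ub hd (hcov ▸ Finset.subset_univ _)
    have hu1 : 1 ≤ u.card := Finset.card_pos.2 hune
    have hv1 : 1 ≤ v.card := Finset.card_pos.2 hvne
    suffices hprod : u.card * v.card = n ^ 2 by
      have h1 : (u.card : ℤ) * v.card = (n:ℤ) ^ 2 := by exact_mod_cast hprod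
      have h2 : (u.card : ℤ) + v.card ≤ 2 * n := by exact_mod_cast hle
      have h3 : (1:ℤ) ≤ u.card := by exact_mod_cast hu1
      have h4 : (1:ℤ) ≤ v.card := by exact_mod_cast hv1
      have h5 : (1:ℤ) ≤ n := by exact_mod_cast (by omega : 1 ≤ n)
      have h6 : ((u.card : ℤ) + v.card) ^ 2 ≤ (2 * (n:ℤ)) ^ 2 :=
        pow_le_pow_left₀ (by linarith) h2 2
      have h7 : ((u.card : ℤ) - v.card) ^ 2 ≤ 0 := by nlinarith
      have h8 : (u.card : ℤ) = v.card := by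
        have h9 := sq_nonneg ((u.card : ℤ) - v.card)
        have h10 : ((u.card : ℤ) - v.card) ^ 2 = 0 := le_antisymm h7 h9
        have h11 := pow_eq_zero_iff (n := 2) (by norm_num) |>.1 h10
        linarith
      have h12 : ((u.card : ℤ) - n) * ((u.card : ℤ) + n) = 0 := by
        linear_combination h1 + (u.card : ℤ) * h8
      rcases mul_eq_zero.1 h12 with h13 | h13
      · have hun : (u.card : ℤ) = n := by linarith
        have hvn : (v.card : ℤ) = n := by linarith
        exact ⟨u, v, huc, hvc, huv, hd, hxu, hyv, hcov, by exact_mod_cast hun,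
          by exact_mod_cast hvn⟩
      · exfalso
        linarith
    by_contra hprod
    -- then coeff of this pair is strictly bigger, contradicting optimality
    have hprodle : u.card * v.card ≤ n ^ 2 - 1 := by
      have h2 : (u.card : ℤ) + v.card ≤ 2 * n := by exact_mod_cast hle
      have h6 : ((u.card : ℤ) + v.card) ^ 2 ≤ (2 * (n:ℤ)) ^ 2 :=
        pow_le_pow_left₀ (by positivity) h2 2
      have h7 : (u.card : ℤ) * v.card ≤ (n:ℤ) ^ 2 := by
        nlinarith [sq_nonneg ((u.card : ℤ) - v.card)]
      have h8 : u.card * v.card ≤ n ^ 2 := by exact_mod_cast h7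
      have h9 : u.card * v.card ≠ n ^ 2 := hprod
      omega
    have hn21 : (1:ℝ) ≤ nn ^ 2 - 1 := by nlinarith
    have hpairlower : 1 / (2 * (nn ^ 2 - 1)) ≤ T.coeff x y := by
      rw [hcoeff]
      have hprodle' : (u.card : ℝ) * v.card ≤ nn ^ 2 - 1 := by
        rw [hnn]
        have : ((u.card * v.card : ℕ) : ℝ) ≤ ((n ^ 2 - 1 : ℕ) : ℝ) := by
          exact_mod_cast hprodle
        push_cast [Nat.cast_sub (by nlinarith : 1 ≤ n ^ 2)] at this
        push_cast
        linarith
      have hu1' : (1:ℝ) ≤ u.card := by exact_mod_cast hu1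
      have hv1' : (1:ℝ) ≤ v.card := by exact_mod_cast hv1
      rw [div_le_div_iff₀ (by positivity) (by positivity)]
      nlinarith
    -- sum lower bound, extracting both ordered bad pairs
    have hp0 : ((x, y) : X × X) ∈ PAB := by
      rw [hPAB, Finset.mem_filter, Finset.mem_offDiag]
      exact ⟨⟨Finset.mem_univ _, Finset.mem_univ _, hne⟩, Or.inl ⟨hx, hy⟩⟩
    have hp1 : ((y, x) : X × X) ∈ PAB := by
      rw [hPAB, Finset.mem_filter, Finset.mem_offDiag]
      exact ⟨⟨Finset.mem_univ _, Finset.mem_univ _, hne.symm⟩, Or.inr ⟨hy, hx⟩⟩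
    have hppne : ((y, x) : X × X) ≠ (x, y) := by
      intro h
      rw [Prod.mk.injEq] at h
      exact hne h.1.symm
    have hmem1 : ((y, x) : X × X) ∈ PAB.erase (x, y) := Finset.mem_erase.2 ⟨hppne, hp1⟩
    have hcard2 : 2 ≤ PAB.card := by
      have h1 := Nat.mul_le_mul hm hm
      rw [hPABcard]; omega
    have hsum_lower : ((PAB.card : ℝ) - 2) * (1 / (2 * nn ^ 2))
        + 2 * (1 / (2 * (nn ^ 2 - 1))) ≤ ∑ p ∈ PAB, T.coeff p.1 p.2 := by
      rw [← Finset.sum_erase_add PAB _ hp0, ← Finset.sum_erase_add _ _ hmem1]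
      have hb1 : 1 / (2 * (nn ^ 2 - 1)) ≤ T.coeff (y, x).1 (y, x).2 := by
        show 1 / (2 * (nn ^ 2 - 1)) ≤ T.coeff y x
        rw [T.coeff_comm y x]
        exact hpairlower
      have hbound := Finset.card_nsmul_le_sum ((PAB.erase (x, y)).erase (y, x))
        (fun p => T.coeff p.1 p.2) (1 / (2 * nn ^ 2))
        (fun p hp => hlowerAll p (Finset.mem_of_mem_erase (Finset.mem_of_mem_erase hp)))
      rw [nsmul_eq_mul, Finset.card_erase_of_mem hmem1, Finset.card_erase_of_mem hp0] at hbound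
      have hcast : ((PAB.card - 1 - 1 : ℕ) : ℝ) = (PAB.card : ℝ) - 2 := by
        have he : PAB.card - 1 - 1 = PAB.card - 2 := by omega
        rw [he, Nat.cast_sub hcard2]
        norm_num
      rw [hcast] at hbound
      have hxy' : 1 / (2 * (nn ^ 2 - 1)) ≤ T.coeff (x, y).1 (x, y).2 := hpairlower
      linarith
    -- score lower bound
    have hlowT : (1/2) * ((((PAB.card : ℝ) - 2) * (1 / (2 * nn ^ 2))
        + 2 * (1 / (2 * (nn ^ 2 - 1)))) * s) ≤ T.score D := by
      rw [hsplit T]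
      have h1 : (∑ p ∈ PAB, T.coeff p.1 p.2) * s
          = ∑ p ∈ PAB, T.coeff p.1 p.2 * D p.1 p.2 := by
        rw [Finset.sum_mul]
        exact Finset.sum_congr rfl (fun p hp => by rw [hDPAB p hp])
      have h2 := hrest_nonneg T hTbin
      have h3 := mul_le_mul_of_nonneg_right hsum_lower hs.le
      rw [h1] at h3
      linarith
    -- contradiction with the upper bound
    have hfin := hlowT.trans hupper
    have hred : 2 * (1 / (2 * (nn ^ 2 - 1))) * s - 2 * (1 / (2 * nn ^ 2)) * s
        ≤ s / (3 * nn ^ 5) * (2 * nn - 1) := by linarith [hfin]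
    have hnn0 : (0:ℝ) < nn ^ 2 - 1 := by nlinarith
    have hh1 : 2 * (1 / (2 * (nn ^ 2 - 1))) * s - 2 * (1 / (2 * nn ^ 2)) * s
        = s / (nn ^ 2 * (nn ^ 2 - 1)) := by
      field_simp
      ring
    have hh2 : s / (3 * nn ^ 5) * (2 * nn - 1) < s / (nn ^ 2 * (nn ^ 2 - 1)) := by
      rw [div_mul_eq_mul_div, div_lt_div_iff₀ (by positivity) (by positivity)]
      have h4 : (4:ℝ) ≤ nn ^ 2 := by nlinarith
      have hpoly : (0:ℝ) < nn ^ 5 + nn ^ 4 + 2 * nn ^ 3 - nn ^ 2 := by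
        nlinarith [h4, pow_pos hnnpos 2, pow_pos hnnpos 3, pow_pos hnnpos 5,
          mul_pos (pow_pos hnnpos 2) (pow_pos hnnpos 2)]
      nlinarith [mul_pos hs hpoly]
    rw [hh1] at hred
    linarith
  -- extract the conclusion
  have hAne : A.Nonempty := Finset.card_pos.1 (by omega)
  have hBne : B.Nonempty := Finset.card_pos.1 (by omega)
  obtain ⟨x0, hx0⟩ := hAne
  obtain ⟨y0, hy0⟩ := hBne
  obtain ⟨u, v, huc, hvc, huv, hd, hx0u, hy0v, hcov, hucard, hvcard⟩ := main x0 hx0 y0 hy0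
  have hcovuniv : u ∪ v = Finset.univ := by
    apply Finset.eq_univ_of_card
    rw [Finset.card_union_of_disjoint hd, hucard, hvcard, hcard]
    omega
  have hbig : ∀ x y : X, x ∈ A → y ∈ B → ∀ W : Finset X, W ∈ T.clusters →
      x ∈ W → y ∈ W → 2 * n ≤ W.card := by
    intro x y hx hy W hW hxW hyW
    obtain ⟨u', v', _, _, _, hd', _, _, hcov', hu'c, hv'c⟩ := main x hx y hy
    have h1 : T.lca x y ⊆ W := T.lca_le hW hxW hyW
    have h2 : 2 * n = (T.lca x y).card := by
      rw [← hcov', Finset.card_union_of_disjoint hd', hu'c, hv'c]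
      omega
    rw [h2]
    exact Finset.card_le_card h1
  have hAu : A ⊆ u := by
    intro x hx
    by_contra hxu
    have hxv : x ∈ v := by
      have : x ∈ u ∪ v := hcovuniv ▸ Finset.mem_univ x
      exact (Finset.mem_union.1 this).resolve_left hxu
    have := hbig x y0 hx hy0 v hvc hxv hy0v
    omega
  have hBv : B ⊆ v := by
    intro y hy
    by_contra hyv
    have hyu : y ∈ u := by
      have : y ∈ u ∪ v := hcovuniv ▸ Finset.mem_univ y
      exact (Finset.mem_union.1 this).resolve_right hyv
    have := hbig x0 y hx0 hy u huc hx0u hyu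
    omega
  exact ⟨u, v, huc, hvc, huv, hd, hucard, hvcard, hAu, hBv⟩
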